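/- For the ideal J = ⟨y² + z^a, y z²⟩ in O(C²) with a ≥ 4, every germ of a closed 2-form ω on (C²,0) has algebraic restriction of the form [ω]_J = A·[dy∧dz]_J + B·[z·dy∧dz]_J for some A, B ∈ C; in particular z² dy∧dz has zero algebraic restriction to J. -/

import Mathlib

open Filter Topology

set_option maxHeartbeats 1000000
set_option synthInstance.maxHeartbeats 400000

noncomputable section

/-- The space `ℂ^m`. -/
abbrev Cm (m : ℕ) := Fin m → ℂ

/-- Model of the ring of `ℂ`-analytic function-germs at `0` on `ℂ^m`:
functions that are analytic at `0`. -/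
def AnalyticGermRing (m : ℕ) : Subalgebra ℂ (Cm m → ℂ) where
  carrier := {f | AnalyticAt ℂ f 0}
  mul_mem' := fun hf hg => hf.mul hg
  add_mem' := fun hf hg => hf.add hg
  algebraMap_mem' := fun _ => analyticAt_const

/-- `O m` : the ring of analytic function-germs at `0 ∈ ℂ^m` (model). -/
abbrev O (m : ℕ) := AnalyticGermRing m

theorem coord_analyticAt (m : ℕ) (i : Fin m) (x : Cm m) :
    AnalyticAt ℂ (fun y : Cm m => y i) x :=
  (ContinuousLinearMap.proj (R := ℂ) (φ := fun _ : Fin m => ℂ) i).analyticAt x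

/-- The `i`-th coordinate function as an analytic germ. -/
def coordO (m : ℕ) (i : Fin m) : O m := ⟨fun y => y i, coord_analyticAt m i 0⟩

/-- Partial derivative `∂/∂x_i` on analytic germs. -/
def pd {m : ℕ} (i : Fin m) (f : O m) : O m :=
  ⟨fun x => fderiv ℂ (f : Cm m → ℂ) x (Pi.single i 1), by
    have h1 : AnalyticAt ℂ (fderiv ℂ (f : Cm m → ℂ)) 0 := f.2.fderiv
    have h2 := (ContinuousLinearMap.apply ℂ ℂ (Pi.single i 1 : Cm m)).analyticAt
      (fderiv ℂ (f : Cm m → ℂ) 0)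
    exact h2.comp h1⟩

/-- Germs of analytic differential `p`-forms on `ℂ^m`, given by their
coefficient family: `ω J` is the coefficient of `dx_{J 0} ⊗ ⋯ ⊗ dx_{J (p-1)}`. -/
abbrev Form (m p : ℕ) := (Fin p → Fin m) → O m

/-- A form is alternating: coefficients vanish on non-injective indices and are
antisymmetric under permutations. -/
def IsAlt {m p : ℕ} (ω : Form m p) : Prop :=
  (∀ J : Fin p → Fin m, ¬ Function.Injective J → ω J = 0) ∧
  ∀ (J : Fin p → Fin m) (σ : Equiv.Perm (Fin p)),
    ω (J ∘ σ) = ((Equiv.Perm.sign σ : ℤ) : ℂ) • ω J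

/-- Exterior derivative on coefficient families. -/
def extD {m p : ℕ} (ω : Form m p) : Form m (p + 1) :=
  fun J => ∑ i : Fin (p + 1), ((-1 : ℂ) ^ (i : ℕ)) • pd (J i) (ω (J ∘ i.succAbove))

/-- Exterior derivative from degree `p-1` to degree `p` (zero in degree `0`). -/
def dLow {m : ℕ} : {p : ℕ} → Form m (p - 1) → Form m p
  | 0, _ => 0
  | _ + 1, β => extD β

/-- `ω ∈ I·Λ^p`: all coefficients lie in the ideal `I`. -/
def memIF {m p : ℕ} (I : Ideal (O m)) (ω : Form m p) : Prop := ∀ J, ω J ∈ I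

/-- Equality of forms as germs at `0`. -/
def FormEq {m p : ℕ} (ω₁ ω₂ : Form m p) : Prop :=
  ∀ J, ((ω₁ J : Cm m → ℂ)) =ᶠ[𝓝 (0 : Cm m)] (ω₂ J : Cm m → ℂ)

/-- `ω` has zero algebraic restriction to `I`:
`ω = α + dβ` with `α ∈ I·Λ^p`, `β ∈ I·Λ^{p-1}`. -/
def ZeroAR {m p : ℕ} (I : Ideal (O m)) (ω : Form m p) : Prop :=
  ∃ (α : Form m p) (β : Form m (p - 1)),
    memIF I α ∧ memIF I β ∧ FormEq ω (α + dLow β)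

/-- Interior product with a vector field. -/
def iprod {m : ℕ} (X : Fin m → O m) : {p : ℕ} → Form m p → Form m (p - 1)
  | 0, _ => 0
  | _ + 1, ω => fun J => ∑ k : Fin m, X k * ω (Fin.cons k J)

/-- Lie derivative of a form along a vector field (Cartan's formula). -/
def lieD {m p : ℕ} (X : Fin m → O m) (ω : Form m p) : Form m p :=
  dLow (iprod X ω) + (show Form m p from iprod X (extD ω))

/-- Wedge product of forms (on coefficient families, with the usual normalization). -/
def wedge {m p q : ℕ} (ω : Form m p) (γ : Form m q) : Form m (p + q) :=
  ((p.factorial * q.factorial : ℂ))⁻¹ •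
    (fun K => ∑ σ : Equiv.Perm (Fin (p + q)),
      ((Equiv.Perm.sign σ : ℤ) : ℂ) •
        (ω (fun i => K (σ (Fin.castAdd q i))) * γ (fun j => K (σ (Fin.natAdd p j)))))

/-- Coefficient family of the pullback `Φ^*ω` (as plain functions). -/
def pullFunF {k m p : ℕ} (Φ : Cm k → Cm m) (ω : Form m p) :
    (Fin p → Fin k) → Cm k → ℂ :=
  fun J x => ∑ K : Fin p → Fin m,
    (ω K : Cm m → ℂ) (Φ x) *
      ∏ i : Fin p, fderiv ℂ (fun y => Φ y (K i)) x (Pi.single (J i) 1)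

/-- The analytic form `ω'` represents the coefficient family `c` (as germs at `0`). -/
def Represents {k p : ℕ} (ω' : Form k p) (c : (Fin p → Fin k) → Cm k → ℂ) : Prop :=
  ∀ J, (ω' J : Cm k → ℂ) =ᶠ[𝓝 (0 : Cm k)] c J

/-- `Φ^*I = I` : `f ∈ I` iff `f ∘ Φ` is (the germ of) an element of `I`. -/
def PreservesIdeal {m : ℕ} (Φ : Cm m → Cm m) (I : Ideal (O m)) : Prop :=
  ∀ f : O m, f ∈ I ↔
    ∃ g ∈ I, (g : Cm m → ℂ) =ᶠ[𝓝 (0 : Cm m)] fun x => (f : Cm m → ℂ) (Φ x)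

/-- A diffeomorphism-germ of `(ℂ^m, 0)` (model). -/
structure LocalDiffeo (m : ℕ) where
  toFun : Cm m → Cm m
  invFun : Cm m → Cm m
  an : AnalyticAt ℂ toFun 0
  map_zero : toFun 0 = 0
  left_inv : ∀ᶠ x in 𝓝 (0 : Cm m), invFun (toFun x) = x
  right_inv : ∀ᶠ x in 𝓝 (0 : Cm m), toFun (invFun x) = x

/-- The algebraic restrictions `[ω₁]_I` and `[ω₂]_I` are diffeomorphic (via a
diffeomorphism-germ preserving `I`). -/
def ARDiffeomorphic {m p : ℕ} (I : Ideal (O m)) (ω₁ ω₂ : Form m p) : Prop :=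
  ∃ Φ : LocalDiffeo m, PreservesIdeal Φ.toFun I ∧
    ∀ ω' : Form m p, Represents ω' (pullFunF Φ.toFun ω₂) → ZeroAR I (ω' - ω₁)

/-- The Euler vector field `Σ λ_i x_i ∂/∂x_i`. -/
def eulerVF (m : ℕ) (lam : Fin m → ℕ) : Fin m → O m :=
  fun i => ((lam i : ℂ)) • coordO m i

/-- The coordinate `y` on `ℂ²`. -/
def Y : O 2 := coordO 2 0
/-- The coordinate `z` on `ℂ²`. -/
def Z : O 2 := coordO 2 1

/-- The 1-form `g dy + h dz` on `ℂ²`. -/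
def oneF (g h : O 2) : Form 2 1 := fun J => if J 0 = 0 then g else h

/-- The 2-form `f dy ∧ dz` on `ℂ²`. -/
def twoF (f : O 2) : Form 2 2 :=
  fun J => if J 0 = 0 ∧ J 1 = 1 then f else if J 0 = 1 ∧ J 1 = 0 then -f else 0


/-! Every 2-form on `ℂ²` is `f dy ∧ dz`, and Hadamard's lemma gives
`f ≡ A + B z` modulo `(y) + (z²)`. For `H = s (y² + zᵃ) + t y z² ∈ J` one has
`d(H dz) = ∂_y H dy ∧ dz ≡ (2 y s + z² t) dy ∧ dz` modulo `J·Λ²`, so `(y G + z² T) dy ∧ dz`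
(with `s = G/2`, `t = T`) has zero algebraic restriction; `z² dy ∧ dz = d(y z² dz)` is the case
`G = 0`, `T = 1`.

Hadamard's lemma is proved on power series: writing `P x = x - ℓ x • v`, the telescoping identity
`p (x, …, x) - p (P x, …, P x) = ∑ᵢ p (x, …, x, ℓ x • v, P x, …, P x)` divides each homogeneous
term of `f x - f (P x)` by `ℓ x`, with a loss of at most a geometric factor in the radius. -/

theorem Fin.insertNth_ite_castSucc_lt {α : Type*} {n : ℕ} (i : Fin (n + 1)) (a b c : α) :
    i.insertNth b (fun j => if j.castSucc < i then a else c) =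
      fun j => if j < i then a else if i = j then b else c := by
  funext j
  rcases i.eq_self_or_eq_succAbove j with rfl | ⟨k, rfl⟩
  · simp
  · simp [Fin.succAbove_lt_iff_castSucc_lt, (Fin.succAbove_ne i k).symm]

namespace FormalMultilinearSeries

variable {𝕜 E F : Type*} [NontriviallyNormedField 𝕜] [NormedAddCommGroup E] [NormedSpace 𝕜 E]
  [NormedAddCommGroup F] [NormedSpace 𝕜 F]

def slopeTerm {n : ℕ} (ℓ : E →L[𝕜] 𝕜) (v : E)
    (p : ContinuousMultilinearMap 𝕜 (fun _ : Fin (n + 1) => E) F) (i : Fin (n + 1)) :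
    ContinuousMultilinearMap 𝕜 (fun _ : Fin n => E) F :=
  (p.curryMid i v).compContinuousLinearMap fun j =>
    if j.castSucc < i then ContinuousLinearMap.id 𝕜 E
    else ContinuousLinearMap.id 𝕜 E - ℓ.smulRight v

def slopeSeries (ℓ : E →L[𝕜] 𝕜) (v : E) (p : FormalMultilinearSeries 𝕜 E F) :
    FormalMultilinearSeries 𝕜 E F :=
  fun n => ∑ i, slopeTerm ℓ v (p (n + 1)) i

theorem smul_sum_slopeTerm {n : ℕ} (ℓ : E →L[𝕜] 𝕜) (v : E)
    (p : ContinuousMultilinearMap 𝕜 (fun _ : Fin (n + 1) => E) F) (x : E) :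
    ℓ x • ∑ i, slopeTerm ℓ v p i (fun _ => x) = p (fun _ => x) - p (fun _ => x - ℓ x • v) := by
  have h := p.toMultilinearMap.map_sub_map_piecewise (fun _ => x) (fun _ => x - ℓ x • v) Finset.univ
  simp only [Finset.piecewise_univ, Finset.mem_univ, forall_const, sub_sub_cancel,
    ContinuousMultilinearMap.coe_coe] at h
  rw [h, Finset.smul_sum]
  refine Finset.sum_congr rfl fun i _ => ?_
  have hP : (fun j : Fin n => (if j.castSucc < i then ContinuousLinearMap.id 𝕜 E
      else ContinuousLinearMap.id 𝕜 E - ℓ.smulRight v) x) =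
      fun j => if j.castSucc < i then x else x - ℓ x • v := by
    funext j; split_ifs <;> simp
  rw [← Fin.insertNth_ite_castSucc_lt, slopeTerm,
    ContinuousMultilinearMap.compContinuousLinearMap_apply, hP,
    ← ContinuousMultilinearMap.curryMid_apply, map_smul]
  rfl

theorem norm_slopeTerm_le {n : ℕ} (ℓ : E →L[𝕜] 𝕜) (v : E)
    (p : ContinuousMultilinearMap 𝕜 (fun _ : Fin (n + 1) => E) F) (i : Fin (n + 1)) :
    ‖slopeTerm ℓ v p i‖ ≤ ‖p‖ * ‖v‖ * max 1 ‖ContinuousLinearMap.id 𝕜 E - ℓ.smulRight v‖ ^ n := by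
  refine (ContinuousMultilinearMap.norm_compContinuousLinearMap_le _ _).trans ?_
  gcongr
  · exact ((p.curryMid i).le_opNorm v).trans_eq (by rw [p.norm_curryMid])
  · refine (Finset.prod_le_prod (fun _ _ => norm_nonneg _) fun j _ => ?_).trans_eq
      ((Finset.prod_const _).trans (by rw [Finset.card_univ, Fintype.card_fin]))
    split_ifs
    · exact ContinuousLinearMap.norm_id_le.trans (le_max_left _ _)
    · exact le_max_right _ _

theorem norm_slopeSeries_le (ℓ : E →L[𝕜] 𝕜) (v : E) (p : FormalMultilinearSeries 𝕜 E F) (n : ℕ) :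
    ‖slopeSeries ℓ v p n‖ ≤
      ‖v‖ * (2 * max 1 ‖ContinuousLinearMap.id 𝕜 E - ℓ.smulRight v‖) ^ n * ‖p (n + 1)‖ := by
  set K := max 1 ‖ContinuousLinearMap.id 𝕜 E - ℓ.smulRight v‖
  calc ‖slopeSeries ℓ v p n‖ ≤ ∑ i : Fin (n + 1), ‖p (n + 1)‖ * ‖v‖ * K ^ n :=
        (norm_sum_le _ _).trans (Finset.sum_le_sum fun i _ => norm_slopeTerm_le ℓ v _ i)
    _ = (n + 1) * (‖v‖ * K ^ n * ‖p (n + 1)‖) := by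
        rw [Finset.sum_const, Finset.card_univ, Fintype.card_fin, nsmul_eq_mul]; push_cast; ring
    _ ≤ 2 ^ n * (‖v‖ * K ^ n * ‖p (n + 1)‖) := by
        gcongr
        exact_mod_cast Nat.lt_two_pow_self
    _ = ‖v‖ * (2 * K) ^ n * ‖p (n + 1)‖ := by ring

theorem radius_slopeSeries_pos (ℓ : E →L[𝕜] 𝕜) (v : E) {p : FormalMultilinearSeries 𝕜 E F}
    (hp : 0 < p.radius) : 0 < (slopeSeries ℓ v p).radius := by
  obtain ⟨r, hr0, hr⟩ := ENNReal.lt_iff_exists_nnreal_btwn.1 hp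
  obtain ⟨C, -, hC⟩ := p.norm_mul_pow_le_of_lt_radius hr
  set K := max 1 ‖ContinuousLinearMap.id 𝕜 E - ℓ.smulRight v‖
  have hK : 0 < K := lt_max_of_lt_left one_pos
  have hr0' : (0 : ℝ) < r := by exact_mod_cast hr0
  set ρ : NNReal := ⟨r / (2 * K), by positivity⟩
  refine lt_of_lt_of_le ?_
    ((slopeSeries ℓ v p).le_radius_of_bound (‖v‖ * C / r) (r := ρ) fun n => ?_)
  · exact_mod_cast (show (0 : ℝ) < r / (2 * K) by positivity)
  calc ‖slopeSeries ℓ v p n‖ * (ρ : ℝ) ^ n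
      ≤ ‖v‖ * (2 * K) ^ n * ‖p (n + 1)‖ * (r / (2 * K)) ^ n := by
        gcongr
        · exact norm_slopeSeries_le ℓ v p n
        · rfl
    _ = ‖v‖ * (‖p (n + 1)‖ * (r : ℝ) ^ (n + 1)) / r := by
        rw [div_pow, mul_pow, pow_succ]
        field_simp
    _ ≤ ‖v‖ * C / r := by gcongr; exact hC (n + 1)

end FormalMultilinearSeries

open FormalMultilinearSeries in
theorem AnalyticAt.exists_sub_comp_eq_smul {𝕜 E F : Type*} [NontriviallyNormedField 𝕜]
    [NormedAddCommGroup E] [NormedSpace 𝕜 E] [NormedAddCommGroup F] [NormedSpace 𝕜 F]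
    [CompleteSpace F] {f : E → F} (hf : AnalyticAt 𝕜 f 0) (ℓ : E →L[𝕜] 𝕜) (v : E) :
    ∃ g : E → F, AnalyticAt 𝕜 g 0 ∧ ∀ᶠ x in 𝓝 0, f x - f (x - ℓ x • v) = ℓ x • g x := by
  obtain ⟨p, hp⟩ := hf
  have hq := (slopeSeries ℓ v p).hasFPowerSeriesOnBall (radius_slopeSeries_pos ℓ v hp.radius_pos)
  refine ⟨(slopeSeries ℓ v p).sum, hq.analyticAt, ?_⟩
  have hP : Tendsto (fun x => x - ℓ x • v) (𝓝 0) (𝓝 0) :=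
    (continuous_id.sub (ℓ.continuous.smul continuous_const)).tendsto' 0 0 (by simp)
  filter_upwards [hp.eventually_hasSum, hP.eventually hp.eventually_hasSum,
    hq.hasFPowerSeriesAt.eventually_hasSum] with x hfx hfPx hqx
  rw [zero_add] at hfx hfPx hqx
  have hdiff := (hasSum_nat_add_iff' 1).2 (hfx.sub hfPx)
  simp only [Finset.range_one, Finset.sum_singleton,
    Subsingleton.elim (fun _ : Fin 0 => x - ℓ x • v) (fun _ => x), sub_self, sub_zero] at hdiff
  refine hdiff.unique ?_
  simpa only [slopeSeries, sum_apply, smul_sum_slopeTerm] using hqx.const_smul (ℓ x)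

def toGerm {m : ℕ} : O m →+* Germ (𝓝 (0 : Cm m)) ℂ :=
  (Germ.coeRingHom _).comp (O m).val.toRingHom

theorem toGerm_eq_toGerm_iff {m : ℕ} {f g : O m} :
    toGerm f = toGerm g ↔ (f : Cm m → ℂ) =ᶠ[𝓝 0] g :=
  Germ.coe_eq

theorem toGerm_pd_add {m : ℕ} (i : Fin m) (f g : O m) :
    toGerm (pd i (f + g)) = toGerm (pd i f) + toGerm (pd i g) := by
  rw [← map_add, toGerm_eq_toGerm_iff]
  filter_upwards [f.2.eventually_analyticAt, g.2.eventually_analyticAt] with x hf hg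
  change fderiv ℂ ((f : Cm m → ℂ) + (g : Cm m → ℂ)) x _ =
    fderiv ℂ (f : Cm m → ℂ) x _ + fderiv ℂ (g : Cm m → ℂ) x _
  rw [fderiv_add hf.differentiableAt hg.differentiableAt]
  rfl

theorem toGerm_pd_mul {m : ℕ} (i : Fin m) (f g : O m) :
    toGerm (pd i (f * g)) = toGerm (pd i f) * toGerm g + toGerm f * toGerm (pd i g) := by
  rw [← map_mul, ← map_mul, ← map_add, toGerm_eq_toGerm_iff]
  filter_upwards [f.2.eventually_analyticAt, g.2.eventually_analyticAt] with x hf hg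
  change fderiv ℂ ((f : Cm m → ℂ) * (g : Cm m → ℂ)) x _ =
    fderiv ℂ (f : Cm m → ℂ) x _ * (g : Cm m → ℂ) x + (f : Cm m → ℂ) x * fderiv ℂ (g : Cm m → ℂ) x _
  rw [fderiv_mul hf.differentiableAt hg.differentiableAt]
  simp only [add_apply, smul_apply, smul_eq_mul]
  ring

theorem pd_algebraMap {m : ℕ} (i : Fin m) (c : ℂ) : pd i (algebraMap ℂ (O m) c) = 0 :=
  Subtype.ext <| funext fun x => by
    change fderiv ℂ (fun _ => c) x _ = 0
    simp

theorem pd_one {m : ℕ} (i : Fin m) : pd i (1 : O m) = 0 := by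
  simpa using pd_algebraMap i 1

theorem pd_zero {m : ℕ} (i : Fin m) : pd i (0 : O m) = 0 := by
  simpa using pd_algebraMap i 0

theorem toGerm_pd_pow {m : ℕ} (i : Fin m) (f : O m) (n : ℕ) :
    toGerm (pd i (f ^ n)) = n * toGerm f ^ (n - 1) * toGerm (pd i f) := by
  induction n with
  | zero => simp [pd_one]
  | succ n ih =>
    rw [pow_succ, toGerm_pd_mul, ih]
    rcases n with _ | n
    · simp
    · simp only [map_pow]
      push_cast
      ring

theorem pd_coordO {m : ℕ} (i j : Fin m) :
    pd i (coordO m j) = algebraMap ℂ (O m) (Pi.single (M := fun _ => ℂ) i 1 j) :=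
  Subtype.ext <| funext fun x => by
    change fderiv ℂ (ContinuousLinearMap.proj (R := ℂ) (φ := fun _ : Fin m => ℂ) j) x _ = _
    rw [ContinuousLinearMap.fderiv]
    rfl

theorem pd_zero_Y : pd 0 Y = 1 := by
  simp [Y, pd_coordO]

theorem pd_zero_Z : pd 0 Z = 0 := by
  simp [Z, pd_coordO]

theorem toGerm_pd_zero_Y_sq_add_Z_pow (a : ℕ) : toGerm (pd 0 (Y ^ 2 + Z ^ a)) = 2 * toGerm Y := by
  simp [toGerm_pd_add, toGerm_pd_pow, pd_zero_Y, pd_zero_Z]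

theorem toGerm_pd_zero_Y_mul_Z_sq : toGerm (pd 0 (Y * Z ^ 2)) = toGerm Z ^ 2 := by
  simp [toGerm_pd_mul, toGerm_pd_pow, pd_zero_Y, pd_zero_Z]

theorem twoF_add (f g : O 2) : twoF (f + g) = twoF f + twoF g := by
  funext J
  simp only [twoF, Pi.add_apply]
  split_ifs <;> abel

theorem twoF_sub (f g : O 2) : twoF (f - g) = twoF f - twoF g := by
  funext J
  simp only [twoF, Pi.sub_apply]
  split_ifs <;> abel

theorem extD_oneF (g h : O 2) : extD (oneF g h) = twoF (pd 0 h - pd 1 g) := by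
  funext J
  simp only [extD, oneF, twoF, Function.comp_apply]
  rcases Fin.exists_fin_two.1 ⟨J 0, rfl⟩ with h0 | h0 <;>
    rcases Fin.exists_fin_two.1 ⟨J 1, rfl⟩ with h1 | h1 <;>
    simp [h0, h1, Fin.succAbove, sub_eq_add_neg]

theorem memIF_twoF {I : Ideal (O 2)} {f : O 2} (hf : f ∈ I) : memIF I (twoF f) := by
  intro J
  simp only [twoF]
  split_ifs
  exacts [hf, I.neg_mem hf, I.zero_mem]

theorem memIF_oneF {I : Ideal (O 2)} {g h : O 2} (hg : g ∈ I) (hh : h ∈ I) :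
    memIF I (oneF g h) := by
  intro J
  simp only [oneF]
  split_ifs
  exacts [hg, hh]

theorem formEq_twoF {f g : O 2} (h : toGerm f = toGerm g) : FormEq (twoF f) (twoF g) := by
  rw [toGerm_eq_toGerm_iff] at h
  intro J
  simp only [twoF]
  split_ifs
  · exact h
  · exact h.neg
  · rfl

theorem IsAlt.eq_twoF {ω : Form 2 2} (hω : IsAlt ω) : ω = twoF (ω ![0, 1]) := by
  obtain ⟨hinj, hperm⟩ := hω
  funext J
  have hJ : J = ![J 0, J 1] := by ext i; fin_cases i <;> rfl
  have hswap : (![1, 0] : Fin 2 → Fin 2) = ![0, 1] ∘ Equiv.swap 0 1 := by decide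
  rcases Fin.exists_fin_two.1 ⟨J 0, rfl⟩ with h0 | h0 <;>
    rcases Fin.exists_fin_two.1 ⟨J 1, rfl⟩ with h1 | h1 <;> rw [hJ, h0, h1]
  · simp [hinj ![0, 0] (by decide), twoF]
  · simp [twoF]
  · rw [hswap, hperm, Equiv.Perm.sign_swap (by decide)]
    simp [twoF]
  · simp [hinj ![1, 1] (by decide), twoF]

theorem zeroAR_twoF_of_toGerm_eq {I : Ideal (O 2)} {f α H : O 2} (hα : α ∈ I) (hH : H ∈ I)
    (h : toGerm f = toGerm (α + pd 0 H)) : ZeroAR I (twoF f) := by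
  refine ⟨twoF α, oneF 0 H, memIF_twoF hα, memIF_oneF I.zero_mem hH, ?_⟩
  change FormEq (twoF f) (twoF α + extD (oneF 0 H))
  rw [extD_oneF, pd_zero, sub_zero, ← twoF_add]
  exact formEq_twoF h

theorem exists_toGerm_eq_add_Y_mul_add_Z_mul (f : O 2) :
    ∃ g h : O 2, toGerm f = toGerm (algebraMap ℂ (O 2) ((f : Cm 2 → ℂ) 0) + Y * g + Z * h) := by
  obtain ⟨g, hg, hfg⟩ := f.2.exists_sub_comp_eq_smul (ContinuousLinearMap.proj 0) (Pi.single 0 1)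
  obtain ⟨h, hh, hfh⟩ := f.2.exists_sub_comp_eq_smul (ContinuousLinearMap.proj 1) (Pi.single 1 1)
  have hP : AnalyticAt ℂ (fun x : Cm 2 => x - x 0 • Pi.single 0 1) 0 :=
    analyticAt_id.sub ((coord_analyticAt 2 0 0).smul analyticAt_const)
  refine ⟨⟨g, hg⟩, ⟨fun x => h (x - x 0 • Pi.single 0 1), hh.comp_of_eq hP (by simp)⟩, ?_⟩
  rw [toGerm_eq_toGerm_iff]
  filter_upwards [hfg, hP.continuousAt.eventually (by simpa using hfh)] with x hx hPx
  have hQ : x - x 0 • Pi.single 0 1 - (x 1 • Pi.single 1 1 : Cm 2) = 0 := by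
    ext i; fin_cases i <;> simp
  simp only [ContinuousLinearMap.proj_apply, smul_eq_mul, Pi.sub_apply, Pi.smul_apply, ne_eq,
    one_ne_zero, not_false_eq_true, Pi.single_eq_of_ne, mul_zero, sub_zero, hQ, Y, coordO, Z,
    AddMemClass.coe_add, SubalgebraClass.coe_algebraMap, MulMemClass.coe_mul, Pi.add_apply,
    Pi.algebraMap_apply, Algebra.algebraMap_self, RingHom.id_apply, Pi.mul_apply] at hx hPx ⊢
  linear_combination hx + hPx

theorem exists_toGerm_eq_add_smul_Z_add_Y_mul_add_Z_sq_mul (f : O 2) :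
    ∃ (A B : ℂ) (G T : O 2), toGerm f = toGerm (A • 1 + B • Z + Y * G + Z ^ 2 * T) := by
  obtain ⟨g, h, hf⟩ := exists_toGerm_eq_add_Y_mul_add_Z_mul f
  obtain ⟨g', h', hh⟩ := exists_toGerm_eq_add_Y_mul_add_Z_mul h
  refine ⟨(f : Cm 2 → ℂ) 0, (h : Cm 2 → ℂ) 0, g + Z * g', h', ?_⟩
  simp only [map_add, map_mul, map_pow, Algebra.smul_def, mul_one] at hf hh ⊢
  rw [hf, hh]
  ring

theorem zeroAR_twoF_of_toGerm_eq_Y_mul_add_Z_sq_mul (a : ℕ) {f : O 2} (G T : O 2)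
    (hf : toGerm f = toGerm (Y * G + Z ^ 2 * T)) :
    ZeroAR (Ideal.span {Y ^ 2 + Z ^ a, Y * Z ^ 2}) (twoF f) := by
  have hP : Y ^ 2 + Z ^ a ∈ Ideal.span {Y ^ 2 + Z ^ a, Y * Z ^ 2} := Ideal.subset_span (by simp)
  have hQ : Y * Z ^ 2 ∈ Ideal.span {Y ^ 2 + Z ^ a, Y * Z ^ 2} := Ideal.subset_span (by simp)
  set s : O 2 := (2⁻¹ : ℂ) • G
  have hs : 2 * toGerm s = toGerm G := by
    rw [← map_ofNat toGerm 2, ← map_mul, mul_smul_comm, two_mul, smul_add, ← add_smul]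
    norm_num
  refine zeroAR_twoF_of_toGerm_eq (α := -(pd 0 s * (Y ^ 2 + Z ^ a) + pd 0 T * (Y * Z ^ 2)))
    (H := s * (Y ^ 2 + Z ^ a) + T * (Y * Z ^ 2))
    (neg_mem (add_mem (Ideal.mul_mem_left _ _ hP) (Ideal.mul_mem_left _ _ hQ)))
    (add_mem (Ideal.mul_mem_left _ _ hP) (Ideal.mul_mem_left _ _ hQ)) ?_
  rw [hf, map_add, map_add, toGerm_pd_add, toGerm_pd_mul, toGerm_pd_mul,
    toGerm_pd_zero_Y_sq_add_Z_pow, toGerm_pd_zero_Y_mul_Z_sq]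
  simp only [map_add, map_mul, map_neg, map_pow]
  linear_combination (-toGerm Y) * hs

theorem statement_11_general (a : ℕ) :
    (∀ ω : Form 2 2, IsAlt ω → FormEq (extD ω) 0 →
      ∃ A B : ℂ,
        ZeroAR (Ideal.span {Y ^ 2 + Z ^ a, Y * Z ^ 2}) (ω - twoF (A • 1 + B • Z))) ∧
    ZeroAR (Ideal.span {Y ^ 2 + Z ^ a, Y * Z ^ 2}) (twoF (Z ^ 2)) := by
  refine ⟨fun ω hω _ => ?_, zeroAR_twoF_of_toGerm_eq_Y_mul_add_Z_sq_mul a 0 1 (by simp)⟩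
  obtain ⟨A, B, G, T, hf⟩ := exists_toGerm_eq_add_smul_Z_add_Y_mul_add_Z_sq_mul (ω ![0, 1])
  refine ⟨A, B, ?_⟩
  rw [hω.eq_twoF, ← twoF_sub]
  exact zeroAR_twoF_of_toGerm_eq_Y_mul_add_Z_sq_mul a G T <| by
    rw [map_sub, hf]
    simp only [map_add]
    ring

/-- for `J = ⟨y² + z^a, y z²⟩`, `a ≥ 4`, every closed 2-form has
algebraic restriction `A[dy∧dz] + B[z dy∧dz]`; in particular `z² dy∧dz` has
zero algebraic restriction to `J`. -/
theorem statement_11 (a : ℕ) (ha : 4 ≤ a) :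
    (∀ ω : Form 2 2, IsAlt ω → FormEq (extD ω) 0 →
      ∃ A B : ℂ,
        ZeroAR (Ideal.span {Y ^ 2 + Z ^ a, Y * Z ^ 2}) (ω - twoF (A • 1 + B • Z))) ∧
    ZeroAR (Ideal.span {Y ^ 2 + Z ^ a, Y * Z ^ 2}) (twoF (Z ^ 2)) :=
  statement_11_general a
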